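/- arXiv:1304.4532 — 3 statements merged into one kernel-verified Lean document; each statement's English description precedes it below -/
import Mathlib

section
/- Let (Q,g) be a Riemannian manifold with non-negative sectional curvature. If the plane spanned by linearly independent vectors X, U ∈ T_qQ has zero sectional curvature, then R(X,U)X = 0, where R is the Riemann curvature tensor. -/
open RealInnerProductSpace

/-- Pointwise form of the flat-section lemma: if `(Q,g)` has
non-negative sectional curvature and the plane spanned by linearly independent
vectors `X, U` has zero sectional curvature, then `R(X,U)X = 0`.  The tangent
space at the point is modelled by a real inner product space `V` and the value
of the Riemann curvature tensor at that point by a trilinear map `R` enjoying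
the standard curvature symmetries. -/
theorem flat_section_nonneg
    {V : Type*} [NormedAddCommGroup V] [InnerProductSpace ℝ V]
    (R : V →ₗ[ℝ] V →ₗ[ℝ] V →ₗ[ℝ] V)
    (hskew₁ : ∀ X Y Z : V, R X Y Z = - R Y X Z)
    (hskew₂ : ∀ X Y Z W : V, ⟪R X Y Z, W⟫ = - ⟪R X Y W, Z⟫)
    (hpair : ∀ X Y Z W : V, ⟪R X Y Z, W⟫ = ⟪R Z W X, Y⟫)
    (hbianchi : ∀ X Y Z : V, R X Y Z + R Y Z X + R Z X Y = 0)
    -- non-negative (unnormalized) sectional curvature: `K(X,U) = ⟪R(X,U)U, X⟫ ≥ 0`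
    (hnonneg : ∀ X U : V, 0 ≤ ⟪R X U U, X⟫)
    (X U : V) (hindep : LinearIndependent ℝ ![X, U])
    (hflat : ⟪R X U U, X⟫ = 0) :
    R X U X = 0 := by
  have sym : ∀ W : V, ⟪R X W U, X⟫ = ⟪R X U W, X⟫ := by
    intro W
    have h1 := hpair X U W X
    have h2 : R W X X = - R X W X := by rw [hskew₁ W X X]
    have h3 := hskew₂ X W X U
    rw [h1, h2, inner_neg_left, h3]; ring
  have key : ∀ W : V, ⟪R X U W, X⟫ = 0 := by
    intro W
    set b := ⟪R X U W, X⟫ with hb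
    set c := ⟪R X W W, X⟫ with hc'
    have hc : 0 ≤ c := hnonneg X W
    have hq : ∀ t : ℝ, 0 ≤ 2 * b * t + c * t ^ 2 := by
      intro t
      have h := hnonneg X (U + t • W)
      have expand : ⟪R X (U + t • W) (U + t • W), X⟫
          = ⟪R X U U, X⟫ + 2 * b * t + c * t ^ 2 := by
        simp only [map_add, map_smul, LinearMap.add_apply, LinearMap.smul_apply,
          inner_add_left, inner_smul_left, RCLike.conj_to_real, real_inner_smul_left]
        rw [hb, hc']
        linear_combination t * sym W
      rw [expand, hflat, zero_add] at h
      exact h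
    have hs : (0:ℝ) < c + 1 := by linarith
    have h1 := hq (-b / (c + 1))
    have h2 : 2 * b * (-b / (c + 1)) + c * (-b / (c + 1)) ^ 2
        = (b ^ 2 * (c - 2 * (c + 1))) / (c + 1) ^ 2 := by
      field_simp; ring
    rw [h2] at h1
    have h3 : 0 ≤ b ^ 2 * (c - 2 * (c + 1)) := by
      have := (div_nonneg_iff.mp h1)
      rcases this with ⟨h, _⟩ | ⟨_, h⟩
      · exact h
      · nlinarith [sq_nonneg (c + 1)]
    have hb2 : b ^ 2 = 0 := le_antisymm (by nlinarith [sq_nonneg b]) (sq_nonneg b)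
    exact pow_eq_zero_iff (two_ne_zero) |>.mp hb2
  have hz : ⟪R X U X, R X U X⟫ = 0 := by
    have h := hskew₂ X U (R X U X) X
    rw [key (R X U X)] at h
    have h2 := hskew₂ X U X (R X U X)
    rw [h2]
    linarith [h]
  exact inner_self_eq_zero.mp hz
end

section
/- Let (Q,g) be a Riemannian manifold with non-positive sectional curvature. If the plane spanned by linearly independent vectors X, U ∈ T_qQ has zero sectional curvature, then R(X,U)X = 0. -/
open RealInnerProductSpace

/-- Pointwise form of the flat-section lemma: if `(Q,g)` has
non-positive sectional curvature and the plane spanned by linearly independent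
vectors `X, U` has zero sectional curvature, then `R(X,U)X = 0`.  The tangent
space at the point is modelled by a real inner product space `V` and the value
of the Riemann curvature tensor at that point by a trilinear map `R` enjoying
the standard curvature symmetries. -/
theorem flat_section_nonpos
    {V : Type*} [NormedAddCommGroup V] [InnerProductSpace ℝ V]
    (R : V →ₗ[ℝ] V →ₗ[ℝ] V →ₗ[ℝ] V)
    (hskew₁ : ∀ X Y Z : V, R X Y Z = - R Y X Z)
    (hskew₂ : ∀ X Y Z W : V, ⟪R X Y Z, W⟫ = - ⟪R X Y W, Z⟫)
    (hpair : ∀ X Y Z W : V, ⟪R X Y Z, W⟫ = ⟪R Z W X, Y⟫)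
    (hbianchi : ∀ X Y Z : V, R X Y Z + R Y Z X + R Z X Y = 0)
    -- non-negative (unnormalized) sectional curvature: `K(X,U) = ⟪R(X,U)U, X⟫ ≤ 0`
    (hnonpos : ∀ X U : V, ⟪R X U U, X⟫ ≤ 0)
    (X U : V) (hindep : LinearIndependent ℝ ![X, U])
    (hflat : ⟪R X U U, X⟫ = 0) :
    R X U X = 0 := by
  -- key: for all Z, the mixed term vanishes
  have key : ∀ Z : V, ⟪R X U X, Z⟫ = 0 := by
    intro Z
    set a : ℝ := ⟪R X U Z, X⟫ + ⟪R X Z U, X⟫ with ha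
    set c : ℝ := ⟪R X Z Z, X⟫ with hc
    have hQ : ∀ t : ℝ, ⟪R X U U, X⟫ + t * a + t ^ 2 * c ≤ 0 := by
      intro t
      have h := hnonpos X (U + t • Z)
      have hexp : ⟪R X (U + t • Z) (U + t • Z), X⟫
          = ⟪R X U U, X⟫ + t * a + t ^ 2 * c := by
        simp only [map_add, map_smul, LinearMap.add_apply, LinearMap.smul_apply,
          inner_add_left, inner_smul_left, starRingEnd_apply, star_trivial, ha, hc]
        ring
      rw [hexp] at h
      exact h
    have hc0 : c ≤ 0 := hnonpos X Z
    have ha0 : a = 0 := by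
      have h1c : (0 : ℝ) < 1 - c := by linarith
      have ht := hQ (a / (1 - c))
      rw [hflat] at ht
      have h2 : a * (a / (1 - c)) + (a / (1 - c)) ^ 2 * c ≤ 0 := by linarith
      have e : a * (a / (1 - c)) + (a / (1 - c)) ^ 2 * c = a ^ 2 / (1 - c) ^ 2 := by
        field_simp
        ring
      rw [e] at h2
      have h3 : a ^ 2 ≤ 0 := by
        by_contra hpos
        push_neg at hpos
        have : 0 < a ^ 2 / (1 - c) ^ 2 := div_pos hpos (by positivity)
        linarith
      nlinarith [sq_nonneg a]
    -- rewrite a in terms of ⟪R X U X, Z⟫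
    have e1 : ⟪R X U Z, X⟫ = - ⟪R X U X, Z⟫ := hskew₂ X U Z X
    have e2 : ⟪R X Z U, X⟫ = - ⟪R X U X, Z⟫ := by
      rw [hpair X Z U X, hskew₁ U X X]
      simp [inner_neg_left]
    rw [ha, e1, e2] at ha0
    linarith
  have := key (R X U X)
  exact inner_self_eq_zero.mp this
end

section
/- Let G⋯P → B be a non-degenerate principal Riemannian submersion (the map X ↦ A_X from the horizontal space to Hom(Horizontal, Vertical) is injective) with curvature 2-form Ω, and let f : M → B be a submersion. Then a vector X ∈ T_mM is A-flat for the pullback bundle f*P → M (with the pullback connection, whose curvature is f*Ω) if and only if df_m(X) = 0. Consequently, maximal A-flat submanifolds of M are exactly the fibers of f. -/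
/-- Abstract model of a Riemannian manifold: points, tangent spaces, metric,
Lie bracket of vector fields and the Levi-Civita connection. -/
structure RiemMfld where
  Pt : Type
  Tan : Pt → Type
  [addgrp : ∀ p, AddCommGroup (Tan p)]
  [mod : ∀ p, Module ℝ (Tan p)]
  g : ∀ p, Tan p → Tan p → ℝ
  g_symm : ∀ p v w, g p v w = g p w v
  g_posdef : ∀ p (v : Tan p), v ≠ 0 → 0 < g p v v
  bracket : (∀ p, Tan p) → (∀ p, Tan p) → (∀ p, Tan p)
  cov : (∀ p, Tan p) → (∀ p, Tan p) → (∀ p, Tan p)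
  torsion_free : ∀ X Y p, cov X Y p - cov Y X p = bracket X Y p

attribute [instance] RiemMfld.addgrp RiemMfld.mod

/-- Vector fields on an abstract Riemannian manifold. -/
abbrev RiemMfld.VF (M : RiemMfld) := ∀ p, M.Tan p

/-- A smooth map between abstract Riemannian manifolds, recorded together with
its differential. -/
structure RiemMap (M B : RiemMfld) where
  toFun : M.Pt → B.Pt
  diff : ∀ p, M.Tan p →ₗ[ℝ] B.Tan (toFun p)

/-- Let `G ⋯ P → B` be a non-degenerate principal Riemannian
submersion with curvature 2-form `Ω` (non-degeneracy being equivalent to: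
`Ω(Y, ·) = 0` implies `Y = 0`), and let `f : M → B` be a submersion.  Since the
curvature form of the pullback connection on `f*P → M` is `f*Ω`, a vector
`X ∈ T_m M` is `A`-flat for the pullback bundle iff `Ω(df X, df Z) = 0` for all
`Z`.  The conclusion: `X` is `A`-flat iff `df_m(X) = 0`; consequently the
`A`-flat vectors at `m` are exactly the kernel of `df_m`, i.e. the tangent
spaces of the fibers of `f`, so the maximal `A`-flat submanifolds are exactly
the fibers of `f`. -/
theorem aflat_iff_tangent_to_fiber
    {M B : RiemMfld} (f : RiemMap M B)
    (𝔤 : Type) [AddCommGroup 𝔤] [Module ℝ 𝔤]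
    -- the curvature 2-form of the principal bundle over `B`:
    (Ω : ∀ b : B.Pt, B.Tan b →ₗ[ℝ] B.Tan b →ₗ[ℝ] 𝔤)
    (hskew : ∀ b (v w : B.Tan b), Ω b v w = - Ω b w v)
    -- non-degeneracy of the principal Riemannian submersion:
    (hnondeg : ∀ b (v : B.Tan b), (∀ w : B.Tan b, Ω b v w = 0) → v = 0)
    -- `f` is a submersion:
    (hf : ∀ m, Function.Surjective (f.diff m)) :
    ∀ (m : M.Pt) (X : M.Tan m),
      ((∀ Z : M.Tan m, Ω (f.toFun m) (f.diff m X) (f.diff m Z) = 0) ↔ f.diff m X = 0)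
      ∧ {X : M.Tan m | ∀ Z : M.Tan m, Ω (f.toFun m) (f.diff m X) (f.diff m Z) = 0}
          = {X : M.Tan m | f.diff m X = 0} := by
  intro m X
  constructor
  · constructor
    · intro h
      apply hnondeg
      intro w
      obtain ⟨Z, rfl⟩ := hf m w
      exact h Z
    · intro h Z; rw [h]; simp
  · ext Y
    simp only [Set.mem_setOf_eq]
    constructor
    · intro h
      apply hnondeg
      intro w
      obtain ⟨Z, rfl⟩ := hf m w
      exact h Z
    · intro h Z; rw [h]; simp
end
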